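/- arXiv:2408.00479 — 2 statements merged into one kernel-verified Lean document; each statement's English description precedes it below -/
import Mathlib

section
/- Let f : [0,1] → ℝ be twice differentiable with values in [0, π/2], let g(t) := cos(f(t)), and suppose g''(t) ≤ -c for some constant c ≥ 0 and all t, with 0 < g(t) ≤ 1. Then (f²)''(t) ≥ 2c for all t where f(t) > 0. -/
/-!
Near a point with `0 < f t < π`, the maps `cos` and `(·) ^ 2` have the differentiable left
inverses `arccos` and `√` along `f`, so `(cos ∘ f)' = -sin f · f'` and `(f²)' = 2 f f'` hold on a
whole neighbourhood of `t`. Differentiating once more at `t`,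
`(cos ∘ f)'' = -(cos f · f'² + sin f · f'')` and `(f²)'' = 2 (f'² + f f'')`. Since `sin f ≤ f`
and `f cos f ≤ sin f` on `[0, π/2]`, multiplying `c ≤ cos f · f'² + sin f · f''` by `f / sin f ≥ 1`
gives `c ≤ f'² + f f''`.
-/

open Real Set Filter Topology

section LeftInverse

variable {𝕜 : Type*} [NontriviallyNormedField 𝕜] {φ ψ f : 𝕜 → 𝕜}

/-- Where `φ` has a differentiable left inverse along `f`, the chain rule for `φ ∘ f` holds even
when `f` is not differentiable: then neither is `φ ∘ f`, and both sides are the junk value `0`. -/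
theorem deriv_comp_of_leftInverse {s : 𝕜} (hφ : DifferentiableAt 𝕜 φ (f s))
    (hψ : DifferentiableAt 𝕜 ψ (φ (f s))) (hinv : (fun u => ψ (φ (f u))) =ᶠ[𝓝 s] f) :
    deriv (fun u => φ (f u)) s = deriv φ (f s) * deriv f s := by
  by_cases hf : DifferentiableAt 𝕜 f s
  · exact deriv_comp s hφ hf
  · have hφf : ¬ DifferentiableAt 𝕜 (fun u => φ (f u)) s := fun h =>
      hf ((hψ.comp s h).congr_of_eventuallyEq hinv.symm)
    rw [deriv_zero_of_not_differentiableAt hφf, deriv_zero_of_not_differentiableAt hf, mul_zero]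

theorem deriv_comp_eventuallyEq_of_leftInverse {t : 𝕜}
    (h : ∀ᶠ s in 𝓝 t, DifferentiableAt 𝕜 φ (f s) ∧ DifferentiableAt 𝕜 ψ (φ (f s)) ∧
      ψ (φ (f s)) = f s) :
    deriv (fun u => φ (f u)) =ᶠ[𝓝 t] fun s => deriv φ (f s) * deriv f s := by
  filter_upwards [h.eventually_nhds] with s hs
  exact deriv_comp_of_leftInverse hs.self_of_nhds.1 hs.self_of_nhds.2.1 (hs.mono fun _ hu => hu.2.2)

end LeftInverse

theorem deriv_cos_comp_eventuallyEq {f : ℝ → ℝ} {t : ℝ} (hf : ContinuousAt f t)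
    (ht : f t ∈ Ioo 0 π) :
    deriv (fun s => cos (f s)) =ᶠ[𝓝 t] fun s => -sin (f s) * deriv f s := by
  have h : ∀ᶠ s in 𝓝 t, DifferentiableAt ℝ cos (f s) ∧
      DifferentiableAt ℝ arccos (cos (f s)) ∧ arccos (cos (f s)) = f s := by
    filter_upwards [hf.eventually (isOpen_Ioo.mem_nhds ht)] with s ⟨h0, hπ⟩
    have hlt : cos (f s) < 1 := by
      simpa using cos_lt_cos_of_nonneg_of_le_pi le_rfl hπ.le h0
    have hgt : -1 < cos (f s) := by
      simpa using cos_lt_cos_of_nonneg_of_le_pi h0.le le_rfl hπ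
    exact ⟨differentiableAt_cos, differentiableAt_arccos.2 ⟨hgt.ne', hlt.ne⟩,
      arccos_cos h0.le hπ.le⟩
  simpa only [Real.deriv_cos] using deriv_comp_eventuallyEq_of_leftInverse h

theorem deriv_sq_comp_eventuallyEq {f : ℝ → ℝ} {t : ℝ} (hf : ContinuousAt f t) (ht : 0 < f t) :
    deriv (fun s => f s ^ 2) =ᶠ[𝓝 t] fun s => 2 * f s * deriv f s := by
  have h : ∀ᶠ s in 𝓝 t, DifferentiableAt ℝ (· ^ 2) (f s) ∧
      DifferentiableAt ℝ sqrt (f s ^ 2) ∧ sqrt (f s ^ 2) = f s := by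
    filter_upwards [hf.eventually (lt_mem_nhds ht)] with s hs
    exact ⟨differentiableAt_pow 2, (hasDerivAt_sqrt (by positivity)).differentiableAt,
      sqrt_sq hs.le⟩
  simpa using deriv_comp_eventuallyEq_of_leftInverse h

theorem mul_cos_le_sin {x : ℝ} (h0 : 0 ≤ x) (h1 : x ≤ π / 2) : x * cos x ≤ sin x := by
  rcases h1.lt_or_eq with h1 | rfl
  · have hcos : 0 < cos x := cos_pos_of_mem_Ioo ⟨by linarith [pi_pos], h1⟩
    rw [← le_div_iff₀ hcos, ← tan_eq_sin_div_cos]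
    exact le_tan h0 h1
  · simp

theorem le_sq_add_mul_of_le_cos_mul_sq_add_sin_mul {x c D F : ℝ} (hc : 0 ≤ c) (h0 : 0 < x)
    (h1 : x ≤ π / 2) (h : c ≤ cos x * D ^ 2 + sin x * F) : c ≤ D ^ 2 + x * F := by
  have hsin : 0 < sin x := sin_pos_of_pos_of_lt_pi h0 (by linarith [pi_pos])
  refine le_of_mul_le_mul_left ?_ hsin
  nlinarith [mul_le_mul_of_nonneg_left h h0.le, mul_le_mul_of_nonneg_right (sin_le h0.le) hc,
    mul_le_mul_of_nonneg_right (mul_cos_le_sin h0.le h1) (sq_nonneg D)]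

theorem stmt_1_general (f : ℝ → ℝ) (c : ℝ) (hc : 0 ≤ c)
    (hf : ∀ t ∈ Icc (0:ℝ) 1, DifferentiableAt ℝ f t)
    (hf' : ∀ t ∈ Icc (0:ℝ) 1, DifferentiableAt ℝ (deriv f) t)
    (hrange : ∀ t ∈ Icc (0:ℝ) 1, f t ∈ Icc 0 (Real.pi/2))
    (hg'' : ∀ t ∈ Icc (0:ℝ) 1, deriv (deriv (fun s => Real.cos (f s))) t ≤ -c) :
    ∀ t ∈ Icc (0:ℝ) 1, 0 < f t → 2 * c ≤ deriv (deriv (fun s => (f s)^2)) t := by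
  intro t ht hft
  have hle : f t ≤ π / 2 := (hrange t ht).2
  have hd := (hf t ht).hasDerivAt
  have hd' := (hf' t ht).hasDerivAt
  have hsq : HasDerivAt (deriv fun s => f s ^ 2)
      (2 * (deriv f t ^ 2 + f t * deriv (deriv f) t)) t :=
    ((hd.const_mul 2).mul hd').congr_of_eventuallyEq
      (deriv_sq_comp_eventuallyEq hd.continuousAt hft) |>.congr_deriv (by ring)
  have hcos : HasDerivAt (deriv fun s => cos (f s))
      (-(cos (f t) * deriv f t ^ 2 + sin (f t) * deriv (deriv f) t)) t :=
    (hd.sin.neg.mul hd').congr_of_eventuallyEq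
      (deriv_cos_comp_eventuallyEq hd.continuousAt ⟨hft, by linarith [pi_pos]⟩)
      |>.congr_deriv (by simp only [Pi.neg_apply]; ring)
  have hconcave := hg'' t ht
  rw [hcos.deriv, neg_le_neg_iff] at hconcave
  rw [hsq.deriv]
  linarith [le_sq_add_mul_of_le_cos_mul_sq_add_sin_mul hc hft hle hconcave]

theorem stmt_1 (f : ℝ → ℝ) (c : ℝ) (hc : 0 ≤ c)
    (hf : ∀ t ∈ Icc (0:ℝ) 1, DifferentiableAt ℝ f t)
    (hf' : ∀ t ∈ Icc (0:ℝ) 1, DifferentiableAt ℝ (deriv f) t)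
    (hrange : ∀ t ∈ Icc (0:ℝ) 1, f t ∈ Icc 0 (Real.pi/2))
    (hg'' : ∀ t ∈ Icc (0:ℝ) 1, deriv (deriv (fun s => Real.cos (f s))) t ≤ -c)
    (hgpos : ∀ t ∈ Icc (0:ℝ) 1, 0 < Real.cos (f t))
    (hgle : ∀ t ∈ Icc (0:ℝ) 1, Real.cos (f t) ≤ 1) :
    ∀ t ∈ Icc (0:ℝ) 1, 0 < f t → 2 * c ≤ deriv (deriv (fun s => (f s)^2)) t :=
  stmt_1_general f c hc hf hf' hrange hg''
end

section
/- Let (X,d_X) and (Y,d_Y) be metric spaces, Ω ⊂ X, u : Ω → Y α-Hölder continuous with constant A (i.e. d_Y(u(x),u(y)) ≤ A d_X(x,y)^α, 0 < α ≤ 1), p ≥ 2, t > 0. For x ∈ Ω define f_t(x) := inf_y [d_X(x,y)^p/(p t^(p-1)) - F(d_Y(u(x),u(y)))] with F(s) = 2 sin(s/2) + 4 sin²(s/2), and suppose the infimum is attained at y_t with d_Y(u(x),u(y_t)) ≤ π. Set L_t(x) := d_X(x, y_t) and D_t(x) := L_t(x)^p/(p t^(p-1)) - f_t(x). Then L_t(x)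 ≤ C t^β, D_t(x) ≤ C' t^{αβ}, and -f_t(x) ≤ C' t^{αβ}, where β = (p-1)/(p-α) and C, C' depend only on p, α and A. -/
/-!
Comparing the minimiser `y_t` with the competitor `y = x` gives `L_t^p / (p t^(p-1)) ≤ F(s)`, where
`s = d_Y(u x, u y_t)`. Since `F(s) ≤ 3 s ≤ 3 A L_t^α`, this yields `L_t^(p-α) ≤ 3 A p t^(p-1)`,
i.e. `L_t ≤ C t^β`. Feeding this back into `F(s) ≤ 3 A L_t^α` bounds `F(s)`, and hence `-f_t ≤ F(s)`.
-/

noncomputable def F (t : ℝ) : ℝ := 2 * Real.sin (t/2) + 4 * (Real.sin (t/2))^2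

lemma F_zero : F 0 = 0 := by simp [F]

lemma F_le_three_mul {s : ℝ} (hs : 0 ≤ s) : F s ≤ 3 * s := by
  have hsin : Real.sin (s / 2) ≤ s / 2 := Real.sin_le (by linarith)
  have habs : |Real.sin (s / 2)| ≤ s / 2 :=
    Real.abs_sin_le_abs.trans (abs_of_nonneg (by linarith)).le
  have hsq : Real.sin (s / 2) ^ 2 ≤ s / 2 := by
    nlinarith [sq_abs (Real.sin (s / 2)), Real.abs_sin_le_one (s / 2), abs_nonneg (Real.sin (s / 2))]
  unfold F
  linarith

lemma le_rpow_inv_of_rpow_le_mul_rpow {L K p α : ℝ} (hL : 0 ≤ L) (hK : 0 ≤ K) (hαp : α < p)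
    (h : L ^ p ≤ K * L ^ α) : L ≤ K ^ (p - α)⁻¹ := by
  obtain rfl | hL := hL.eq_or_lt
  · exact Real.rpow_nonneg hK _
  rw [Real.le_rpow_inv_iff_of_pos hL.le hK (by linarith), Real.rpow_sub hL,
    div_le_iff₀ (Real.rpow_pos_of_pos hL α)]
  exact h

lemma dist_rpow_div_le_F_of_forall_le {X Y : Type*} [MetricSpace X] [MetricSpace Y]
    {Ω : Set X} {u : X → Y} {p t : ℝ} {x yt : X} (hp : p ≠ 0) (hx : x ∈ Ω)
    (hmin : ∀ y ∈ Ω, dist x yt ^ p / (p * t ^ (p - 1)) - F (dist (u x) (u yt))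
      ≤ dist x y ^ p / (p * t ^ (p - 1)) - F (dist (u x) (u y))) :
    dist x yt ^ p / (p * t ^ (p - 1)) ≤ F (dist (u x) (u yt)) := by
  have h := hmin x hx
  rw [dist_self, dist_self, Real.zero_rpow hp, zero_div, F_zero] at h
  linarith

section HolderBounds

variable {p α A t L s : ℝ}

lemma le_mul_rpow_of_rpow_div_le_F (hp : 0 < p) (hαp : α < p) (hA : 0 ≤ A) (ht : 0 < t)
    (hL : 0 ≤ L) (hs : 0 ≤ s) (hsL : s ≤ A * L ^ α) (hmin : L ^ p / (p * t ^ (p - 1)) ≤ F s) :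
    L ≤ (3 * A * p) ^ (p - α)⁻¹ * t ^ ((p - 1) / (p - α)) := by
  have hP : 0 < p * t ^ (p - 1) := mul_pos hp (Real.rpow_pos_of_pos ht _)
  have hLp : L ^ p ≤ (3 * A * p * t ^ (p - 1)) * L ^ α := by
    rw [div_le_iff₀ hP] at hmin
    nlinarith [F_le_three_mul hs]
  have hK : 0 ≤ 3 * A * p * t ^ (p - 1) := by positivity
  calc L ≤ (3 * A * p * t ^ (p - 1)) ^ (p - α)⁻¹ := le_rpow_inv_of_rpow_le_mul_rpow hL hK hαp hLp
    _ = (3 * A * p) ^ (p - α)⁻¹ * t ^ ((p - 1) / (p - α)) := by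
      rw [Real.mul_rpow (by positivity) (Real.rpow_nonneg ht.le _), ← Real.rpow_mul ht.le,
        div_eq_mul_inv]

lemma F_le_mul_rpow_of_le_mul_rpow {C β : ℝ} (hα : 0 ≤ α) (hA : 0 ≤ A) (hC : 0 ≤ C)
    (ht : 0 ≤ t) (hL : 0 ≤ L) (hs : 0 ≤ s) (hsL : s ≤ A * L ^ α) (hLt : L ≤ C * t ^ β) :
    F s ≤ 3 * A * C ^ α * t ^ (α * β) := by
  have hLα : L ^ α ≤ C ^ α * t ^ (α * β) := by
    calc L ^ α ≤ (C * t ^ β) ^ α := Real.rpow_le_rpow hL hLt hα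
      _ = C ^ α * t ^ (α * β) := by
        rw [Real.mul_rpow hC (Real.rpow_nonneg ht _), ← Real.rpow_mul ht, mul_comm β]
  calc F s ≤ 3 * s := F_le_three_mul hs
    _ ≤ 3 * (A * (C ^ α * t ^ (α * β))) := by gcongr; exact hsL.trans (by gcongr)
    _ = 3 * A * C ^ α * t ^ (α * β) := by ring

end HolderBounds

theorem stmt_7 (p α A : ℝ) (hp : 2 ≤ p) (hα : 0 < α) (hα1 : α ≤ 1) (hA : 0 < A) :
    ∃ C C' : ℝ, 0 < C ∧ 0 < C' ∧
      ∀ (X Y : Type) [MetricSpace X] [MetricSpace Y] (Ω : Set X) (u : X → Y),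
        (∀ x ∈ Ω, ∀ y ∈ Ω, dist (u x) (u y) ≤ A * dist x y ^ α) →
        ∀ t : ℝ, 0 < t → ∀ x ∈ Ω, ∀ yt ∈ Ω,
          (∀ y ∈ Ω, dist x yt ^ p / (p * t ^ (p - 1)) - F (dist (u x) (u yt))
              ≤ dist x y ^ p / (p * t ^ (p - 1)) - F (dist (u x) (u y))) →
          dist (u x) (u yt) ≤ Real.pi →
          dist x yt ≤ C * t ^ ((p - 1) / (p - α)) ∧
          F (dist (u x) (u yt)) ≤ C' * t ^ (α * (p - 1) / (p - α)) ∧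
          -(dist x yt ^ p / (p * t ^ (p - 1)) - F (dist (u x) (u yt)))
              ≤ C' * t ^ (α * (p - 1) / (p - α)) := by
  have hp0 : 0 < p := by linarith
  have hαp : α < p := by linarith
  set C : ℝ := (3 * A * p) ^ (p - α)⁻¹
  have hC : 0 < C := Real.rpow_pos_of_pos (by positivity) _
  refine ⟨C, 3 * A * C ^ α, hC, by positivity, ?_⟩
  intro X Y _ _ Ω u hu t ht x hx yt hyt hmin _
  have hsL := hu x hx yt hyt
  have hLp := dist_rpow_div_le_F_of_forall_le hp0.ne' hx hmin
  have hLt := le_mul_rpow_of_rpow_div_le_F hp0 hαp hA.le ht dist_nonneg dist_nonneg hsL hLp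
  have hFs := F_le_mul_rpow_of_le_mul_rpow hα.le hA.le hC.le ht.le dist_nonneg dist_nonneg hsL hLt
  rw [← mul_div_assoc] at hFs
  refine ⟨hLt, hFs, ?_⟩
  have : 0 ≤ dist x yt ^ p / (p * t ^ (p - 1)) := by positivity
  linarith
end
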